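/- Let Ω := 𝕋²×(−1,1), let η : [0,T]×Ω → ℝ³ be C² with invertible spatial Jacobian at every point, v := ∂_tη, A := [∂η]^{−1}, J := det[∂η], and let R > 0 be C¹ with ∂_t R + R·div_A v = 0 and b be C¹ with ∂_t b_i = b_j A^{kj} ∂_k v_i − b_i (A^{kj}∂_k v_j). Then for each l = 1,2,3 the scalar function (b_i A^{li})/R is independent of t; consequently, if η(0,·) = Id, R(0,·) = ρ₀ and b(0,·) = b₀, then b_i A^{li} = J^{−1} b₀^l for all t. -/

import Mathlib

noncomputable section

open Set MeasureTheory Matrix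

abbrev V3 : Type := Fin 3 → ℝ

/-- The `l`-th standard basis vector of `ℝ³`. -/
def e3 (l : Fin 3) : V3 := Pi.single l 1

/-- Spatial partial derivative `∂_l f` of a scalar field. -/
def pd (l : Fin 3) (f : V3 → ℝ) (y : V3) : ℝ := fderiv ℝ f y (e3 l)

/-- Ω = 𝕋² × (−1,1), modeled periodically as ℝ² × (−1,1) ⊆ ℝ³. -/
def Om : Set V3 := {y | y 2 ∈ Ioo (-1 : ℝ) 1}

/-- Γ = 𝕋² × ({−1} ∪ {1}). -/
def Gam : Set V3 := {y | y 2 = -1 ∨ y 2 = 1}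

/-- Jacobian matrix `[∂η](t,y)`, with entry `(i, l)` equal to `∂_l η_i`. -/
def Dmat (η : ℝ → V3 → V3) (t : ℝ) (y : V3) : Matrix (Fin 3) (Fin 3) ℝ :=
  Matrix.of fun i l => pd l (fun z => η t z i) y

/-- `J = det [∂η]`. -/
def Jdet (η : ℝ → V3 → V3) (t : ℝ) (y : V3) : ℝ := (Dmat η t y).det

/-- `A = [∂η]⁻¹`, with entry `(l, i)` equal to `A^{li}`. -/
def Amat (η : ℝ → V3 → V3) (t : ℝ) (y : V3) : Matrix (Fin 3) (Fin 3) ℝ :=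
  (Dmat η t y)⁻¹

/-- `div_A X = A^{li} ∂_l X_i`. -/
def divA (η : ℝ → V3 → V3) (X : ℝ → V3 → V3) (t : ℝ) (y : V3) : ℝ :=
  ∑ l, ∑ i, Amat η t y l i * pd l (fun z => X t z i) y

/-! Along each particle path `y` the Jacobian `D = [∂η]` satisfies `∂ₜ D = [∂v]`, because the
mixed partial derivatives of `η` commute. Jacobi's formula `∂ₜ J = tr (adj D · ∂ₜ D) = J div_A v`
and the continuity equation then make `J R` constant in time. Differentiating
`D · adj D = J · 1` gives `∂ₜ adj D = (J div_A v) A - A [∂v] adj D`, and with the induction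
equation the vector `adj D · b = J A b` is constant as well. Since `A b = J⁻¹ (adj D · b)`, the
quantity `(A b)/R = (adj D · b)/(J R)` is a ratio of conserved quantities; when `η(0,·) = Id`,
`adj D · b` equals `b₀` at `t = 0`. -/

namespace Matrix

section Determinant

variable {n R : Type*} [Fintype n] [DecidableEq n] [CommRing R]

theorem prod_updateCol_apply_perm (M : Matrix n n R) (c : n → R) (σ : Equiv.Perm n) (j : n) :
    ∏ i, M.updateCol j c (σ i) i = c (σ j) * ∏ i ∈ Finset.univ.erase j, M (σ i) i := by
  rw [← Finset.mul_prod_erase _ _ (Finset.mem_univ j)]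
  congr 1
  · simp
  · exact Finset.prod_congr rfl fun i hi => by simp [Finset.ne_of_mem_erase hi]

theorem sum_det_updateCol (M N : Matrix n n R) :
    ∑ j, (M.updateCol j fun i => N i j).det = trace (adjugate M * N) := by
  simp only [← cramer_apply, cramer_eq_adjugate_mulVec, trace, diag, mul_apply, mulVec, dotProduct]

end Determinant

section Inverse

variable {n 𝕜 : Type*} [Fintype n] [DecidableEq n] [Field 𝕜]

theorem adjugate_eq_det_smul_inv {A : Matrix n n 𝕜} (h : IsUnit A.det) :
    adjugate A = A.det • A⁻¹ := by
  rw [inv_def, smul_smul, Ring.mul_inverse_cancel _ h, one_smul]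

theorem trace_adjugate_mul {A : Matrix n n 𝕜} (h : IsUnit A.det) (N : Matrix n n 𝕜) :
    trace (adjugate A * N) = A.det * trace (A⁻¹ * N) := by
  rw [adjugate_eq_det_smul_inv h, smul_mul, trace_smul, smul_eq_mul]

theorem sum_mul_inv_apply (A : Matrix n n 𝕜) (b : n → 𝕜) (l : n) :
    ∑ i, b i * A⁻¹ l i = A.det⁻¹ * (adjugate A *ᵥ b) l := by
  simp only [inv_def, Ring.inverse_eq_inv', Matrix.smul_apply, smul_eq_mul, mulVec, dotProduct,
    Finset.mul_sum]
  exact Finset.sum_congr rfl fun i _ => by ring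

end Inverse

section Derivatives

variable {n 𝕜 : Type*} [Fintype n] [NontriviallyNormedField 𝕜]
  {D : 𝕜 → Matrix n n 𝕜} {D' : Matrix n n 𝕜} {t : 𝕜}

theorem hasDerivAt_mul_apply {E : 𝕜 → Matrix n n 𝕜} {E' : Matrix n n 𝕜}
    (hD : ∀ i j, HasDerivAt (fun s => D s i j) (D' i j) t)
    (hE : ∀ i j, HasDerivAt (fun s => E s i j) (E' i j) t) (i j : n) :
    HasDerivAt (fun s => (D s * E s) i j) ((D' * E t + D t * E') i j) t := by
  simp only [mul_apply, add_apply, ← Finset.sum_add_distrib]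
  exact HasDerivAt.fun_sum fun k _ => (hD i k).mul (hE k j)

theorem hasDerivAt_mulVec_apply {b : 𝕜 → n → 𝕜} {b' : n → 𝕜}
    (hD : ∀ i j, HasDerivAt (fun s => D s i j) (D' i j) t)
    (hb : ∀ i, HasDerivAt (fun s => b s i) (b' i) t) (i : n) :
    HasDerivAt (fun s => (D s *ᵥ b s) i) ((D' *ᵥ b t + D t *ᵥ b') i) t := by
  simp only [mulVec, dotProduct, Pi.add_apply, ← Finset.sum_add_distrib]
  exact HasDerivAt.fun_sum fun k _ => (hD i k).mul (hb k)

variable [DecidableEq n]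

theorem hasDerivAt_det (hD : ∀ i j, HasDerivAt (fun s => D s i j) (D' i j) t) :
    HasDerivAt (fun s => (D s).det) (trace (adjugate (D t) * D')) t := by
  have hterm : ∀ σ : Equiv.Perm n,
      HasDerivAt (fun s => (Equiv.Perm.sign σ : 𝕜) * ∏ i, D s (σ i) i)
        ((Equiv.Perm.sign σ : 𝕜) * ∑ j, ∏ i, (D t).updateCol j (fun i => D' i j) (σ i) i) t := by
    intro σ
    refine (HasDerivAt.fun_finsetProd fun i _ => hD (σ i) i).const_mul _ |>.congr_deriv ?_
    simp only [prod_updateCol_apply_perm, smul_eq_mul, mul_comm]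
  rw [← sum_det_updateCol]
  simp only [det_apply']
  refine (HasDerivAt.fun_sum fun σ _ => hterm σ).congr_deriv ?_
  simp only [Finset.mul_sum]
  exact Finset.sum_comm

theorem exists_hasDerivAt_adjugate (hD : ∀ i j, HasDerivAt (fun s => D s i j) (D' i j) t) :
    ∃ X : Matrix n n 𝕜, ∀ i j, HasDerivAt (fun s => adjugate (D s) i j) (X i j) t := by
  refine ⟨of fun i j => trace (adjugate ((D t).updateRow j (Pi.single i 1)) *
    D'.updateRow j 0), fun i j => ?_⟩
  simp only [adjugate_apply, of_apply]
  refine hasDerivAt_det fun a b => ?_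
  by_cases h : a = j
  · subst h
    simpa using hasDerivAt_const t _
  · simpa [h] using hD a b

theorem hasDerivAt_adjugate (hD : ∀ i j, HasDerivAt (fun s => D s i j) (D' i j) t)
    (hdet : IsUnit (D t).det) (i j : n) :
    HasDerivAt (fun s => adjugate (D s) i j)
      ((trace (adjugate (D t) * D') • (D t)⁻¹ - (D t)⁻¹ * D' * adjugate (D t)) i j) t := by
  obtain ⟨X, hX⟩ := exists_hasDerivAt_adjugate hD
  have hprod : D' * adjugate (D t) + D t * X = trace (adjugate (D t) * D') • 1 := by
    ext a b
    refine (hasDerivAt_mul_apply hD hX a b).unique ?_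
    simp only [mul_adjugate, smul_apply, smul_eq_mul]
    exact (hasDerivAt_det hD).mul_const _
  have hX_eq : X = (D t)⁻¹ * (trace (adjugate (D t) * D') • 1 - D' * adjugate (D t)) := by
    rw [← hprod, add_sub_cancel_left, ← Matrix.mul_assoc, nonsing_inv_mul _ hdet, Matrix.one_mul]
  rw [hX_eq, Matrix.mul_sub, Matrix.mul_smul, Matrix.mul_one, ← Matrix.mul_assoc] at hX
  exact hX i j

theorem hasDerivAt_det_mul_eq_zero {r : 𝕜 → 𝕜}
    (hD : ∀ i j, HasDerivAt (fun s => D s i j) (D' i j) t) (hdet : IsUnit (D t).det)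
    (hr : HasDerivAt r (-(r t * trace ((D t)⁻¹ * D'))) t) :
    HasDerivAt (fun s => (D s).det * r s) 0 t := by
  refine ((hasDerivAt_det hD).mul hr).congr_deriv ?_
  rw [trace_adjugate_mul hdet]
  ring

theorem hasDerivAt_adjugate_mulVec_eq_zero {b : 𝕜 → n → 𝕜}
    (hD : ∀ i j, HasDerivAt (fun s => D s i j) (D' i j) t) (hdet : IsUnit (D t).det)
    (hb : ∀ i, HasDerivAt (fun s => b s i)
      ((D' *ᵥ ((D t)⁻¹ *ᵥ b t) - trace ((D t)⁻¹ * D') • b t) i) t) (l : n) :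
    HasDerivAt (fun s => (adjugate (D s) *ᵥ b s) l) 0 t := by
  refine (hasDerivAt_mulVec_apply (hasDerivAt_adjugate hD hdet) hb l).congr_deriv ?_
  rw [trace_adjugate_mul hdet, adjugate_eq_det_smul_inv hdet]
  simp only [sub_mulVec, smul_mulVec, mulVec_sub, mulVec_smul, ← mulVec_mulVec, Matrix.mul_smul,
    smul_smul, mul_comm (trace _)]
  simp

end Derivatives

end Matrix

open Matrix

section PartialDerivatives

variable {E F : Type*} [NormedAddCommGroup E] [NormedSpace ℝ E] [NormedAddCommGroup F]
  [NormedSpace ℝ F]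

theorem HasFDerivAt.hasDerivAt_comp_prodMk_left {g : ℝ × E → F} {g' : ℝ × E →L[ℝ] F} {t : ℝ}
    {z : E} (h : HasFDerivAt g g' (t, z)) : HasDerivAt (fun s => g (s, z)) (g' (1, 0)) t :=
  h.comp_hasDerivAt t ((hasDerivAt_id t).prodMk (hasDerivAt_const t z))

theorem HasFDerivAt.fderiv_comp_prodMk_right {g : ℝ × E → F} {g' : ℝ × E →L[ℝ] F} {s : ℝ}
    {y : E} (h : HasFDerivAt g g' (s, y)) (w : E) :
    fderiv ℝ (fun z => g (s, z)) y w = g' (0, w) := by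
  have hpartial : HasFDerivAt (fun z => g (s, z)) (g'.comp (.inr ℝ ℝ E)) y :=
    h.comp y (hasFDerivAt_prodMk_right s y)
  simp [hpartial.fderiv]

theorem ContDiff.differentiable_slice {f : ℝ → E → F} {k : WithTop ℕ∞}
    (hf : ContDiff ℝ k (fun p : ℝ × E => f p.1 p.2)) (hk : k ≠ 0) (z : E) :
    Differentiable ℝ (fun s => f s z) :=
  (hf.comp (contDiff_id.prodMk contDiff_const)).differentiable hk

theorem hasDerivAt_fderiv_apply_of_contDiff {f : ℝ → E → F}
    (hf : ContDiff ℝ 2 (fun p : ℝ × E => f p.1 p.2)) (t : ℝ) (y w : E) :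
    HasDerivAt (fun s => fderiv ℝ (f s) y w)
      (fderiv ℝ (fun z => deriv (fun s => f s z) t) y w) t := by
  set g : ℝ × E → F := fun p => f p.1 p.2
  have hg : Differentiable ℝ g := hf.differentiable (by norm_num)
  have hg' : Differentiable ℝ (fderiv ℝ g) := (hf.fderiv_right le_rfl).differentiable one_ne_zero
  have hspace : ∀ s, fderiv ℝ (f s) y w = fderiv ℝ g (s, y) (0, w) := fun s =>
    (hg (s, y)).hasFDerivAt.fderiv_comp_prodMk_right w
  have htime : (fun z => deriv (fun s => f s z) t) = fun z => fderiv ℝ g (t, z) (1, 0) :=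
    funext fun z => (hg (t, z)).hasFDerivAt.hasDerivAt_comp_prodMk_left.deriv
  have hsymm : fderiv ℝ (fderiv ℝ g) (t, y) (1, 0) (0, w) =
      fderiv ℝ (fderiv ℝ g) (t, y) (0, w) (1, 0) :=
    hf.contDiffAt.isSymmSndFDerivAt (by simp) _ _
  have happly : ∀ u : ℝ × E, HasFDerivAt (fun p => fderiv ℝ g p u)
      ((fderiv ℝ (fderiv ℝ g) (t, y)).flip u) (t, y) := fun u => by
    simpa using (hg' (t, y)).hasFDerivAt.clm_apply (hasFDerivAt_const u (t, y))
  simp_rw [hspace, htime, (happly (1, 0)).fderiv_comp_prodMk_right]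
  simpa [hsymm] using (happly (0, w)).hasDerivAt_comp_prodMk_left

end PartialDerivatives

theorem constant_of_hasDerivAt_zero {f : ℝ → ℝ} {a b : ℝ}
    (hf : ∀ x ∈ Icc a b, HasDerivAt f 0 x) : ∀ x ∈ Icc a b, f x = f a :=
  constant_of_has_deriv_right_zero (fun x hx => (hf x hx).continuousAt.continuousWithinAt)
    fun x hx => (hf x (Ico_subset_Icc_self hx)).hasDerivWithinAt

theorem divA_eq_trace (η X : ℝ → V3 → V3) (t : ℝ) (y : V3) :
    divA η X t y = trace (Amat η t y * Dmat X t y) := by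
  simp [divA, trace, mul_apply, Dmat]

theorem induction_rhs_eq_mulVec (η v b : ℝ → V3 → V3) (t : ℝ) (y : V3) (i : Fin 3) :
    (∑ j, ∑ k, b t y j * Amat η t y k j * pd k (fun z => v t z i) y) - b t y i * divA η v t y
      = (Dmat v t y *ᵥ (Amat η t y *ᵥ b t y) - trace (Amat η t y * Dmat v t y) • b t y) i := by
  simp only [divA_eq_trace, Pi.sub_apply, Pi.smul_apply, smul_eq_mul, mulVec, dotProduct,
    Finset.mul_sum, Dmat, of_apply]
  rw [Finset.sum_comm, mul_comm (b t y i)]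
  congr 1
  exact Finset.sum_congr rfl fun k _ => Finset.sum_congr rfl fun j _ => by ring

theorem Dmat_eq_one {η : ℝ → V3 → V3} {t : ℝ} (h : ∀ z, η t z = z) (y : V3) :
    Dmat η t y = 1 := by
  ext i l
  simp [Dmat, pd, h, e3, one_apply, (hasFDerivAt_apply i y).fderiv, Pi.single_apply]

theorem hasDerivAt_Dmat {η v : ℝ → V3 → V3} (hη : ContDiff ℝ 2 (fun p : ℝ × V3 => η p.1 p.2))
    (hv : ∀ t y, v t y = deriv (fun s => η s y) t) (t : ℝ) (y : V3) (i l : Fin 3) :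
    HasDerivAt (fun s => Dmat η s y i l) (Dmat v t y i l) t := by
  have hcoord : ∀ i, ContDiff ℝ 2 (fun p : ℝ × V3 => η p.1 p.2 i) := contDiff_pi.mp hη
  have hvi : (fun z => deriv (fun s => η s z i) t) = fun z => v t z i := funext fun z => by
    rw [hv, deriv_pi fun j =>
      (hcoord j).differentiable_slice (f := fun s z => η s z j) two_ne_zero z t]
  simpa [Dmat, pd, hvi] using
    hasDerivAt_fderiv_apply_of_contDiff (f := fun s z => η s z i) (hcoord i) t y (e3 l)

section Conservation

variable {T : ℝ} {η v : ℝ → V3 → V3} {y : V3}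

theorem det_Dmat_mul_eq_of_continuity (hη : ContDiff ℝ 2 (fun p : ℝ × V3 => η p.1 p.2))
    (hinv : ∀ t ∈ Icc (0 : ℝ) T, ∀ y ∈ Om, (Dmat η t y).det ≠ 0)
    (hv : ∀ t y, v t y = deriv (fun s => η s y) t) {R : ℝ → V3 → ℝ}
    (hR : ContDiff ℝ 1 (fun p : ℝ × V3 => R p.1 p.2))
    (hcont : ∀ t ∈ Icc (0 : ℝ) T, ∀ y ∈ Om,
      deriv (fun s => R s y) t + R t y * divA η v t y = 0) (hy : y ∈ Om) :
    ∀ t ∈ Icc (0 : ℝ) T, (Dmat η t y).det * R t y = (Dmat η 0 y).det * R 0 y := by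
  refine constant_of_hasDerivAt_zero fun t ht => ?_
  refine hasDerivAt_det_mul_eq_zero (hasDerivAt_Dmat hη hv t y) (hinv t ht y hy).isUnit ?_
  have hRt := (hR.differentiable_slice (f := R) one_ne_zero y t).hasDerivAt
  rw [eq_neg_of_add_eq_zero_left (hcont t ht y hy), divA_eq_trace] at hRt
  exact hRt

theorem adjugate_Dmat_mulVec_eq_of_induction (hη : ContDiff ℝ 2 (fun p : ℝ × V3 => η p.1 p.2))
    (hinv : ∀ t ∈ Icc (0 : ℝ) T, ∀ y ∈ Om, (Dmat η t y).det ≠ 0)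
    (hv : ∀ t y, v t y = deriv (fun s => η s y) t) {b : ℝ → V3 → V3}
    (hb : ContDiff ℝ 1 (fun p : ℝ × V3 => b p.1 p.2))
    (hind : ∀ t ∈ Icc (0 : ℝ) T, ∀ y ∈ Om, ∀ i : Fin 3,
      deriv (fun s => b s y i) t
        = (∑ j, ∑ k, b t y j * Amat η t y k j * pd k (fun z => v t z i) y)
          - b t y i * divA η v t y) (hy : y ∈ Om) :
    ∀ t ∈ Icc (0 : ℝ) T, adjugate (Dmat η t y) *ᵥ b t y = adjugate (Dmat η 0 y) *ᵥ b 0 y := by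
  intro t ht
  ext l
  refine constant_of_hasDerivAt_zero (f := fun s => (adjugate (Dmat η s y) *ᵥ b s y) l)
    (fun s hs => ?_) t ht
  refine hasDerivAt_adjugate_mulVec_eq_zero (hasDerivAt_Dmat hη hv s y) (hinv s hs y hy).isUnit
    (fun i => ?_) l
  have hbs := ((contDiff_pi.mp hb i).differentiable_slice (f := fun s z => b s z i)
    one_ne_zero y s).hasDerivAt
  rw [hind s hs y hy i, induction_rhs_eq_mulVec] at hbs
  exact hbs

end Conservation

theorem b_dot_A_over_R_conserved_general
    (T : ℝ)
    (η : ℝ → V3 → V3)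
    (hη : ContDiff ℝ 2 (fun p : ℝ × V3 => η p.1 p.2))
    (hinv : ∀ t ∈ Icc (0 : ℝ) T, ∀ y ∈ Om, (Dmat η t y).det ≠ 0)
    (v : ℝ → V3 → V3)
    (hv : ∀ t y, v t y = deriv (fun s => η s y) t)
    (R : ℝ → V3 → ℝ)
    (hR : ContDiff ℝ 1 (fun p : ℝ × V3 => R p.1 p.2))
    (hcont : ∀ t ∈ Icc (0 : ℝ) T, ∀ y ∈ Om,
      deriv (fun s => R s y) t + R t y * divA η v t y = 0)
    (b : ℝ → V3 → V3)
    (hb : ContDiff ℝ 1 (fun p : ℝ × V3 => b p.1 p.2))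
    (hind : ∀ t ∈ Icc (0 : ℝ) T, ∀ y ∈ Om, ∀ i : Fin 3,
      deriv (fun s => b s y i) t
        = (∑ j, ∑ k, b t y j * Amat η t y k j * pd k (fun z => v t z i) y)
          - b t y i * divA η v t y) :
    (∀ l : Fin 3, ∀ t ∈ Icc (0 : ℝ) T, ∀ y ∈ Om,
        (∑ i, b t y i * Amat η t y l i) / R t y
          = (∑ i, b 0 y i * Amat η 0 y l i) / R 0 y)
    ∧ ((∀ z, η 0 z = z) →
        ∀ (ρ₀ : V3 → ℝ) (b₀ : V3 → V3), (∀ z, R 0 z = ρ₀ z) → (∀ z, b 0 z = b₀ z) →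
        ∀ l : Fin 3, ∀ t ∈ Icc (0 : ℝ) T, ∀ y ∈ Om,
          ∑ i, b t y i * Amat η t y l i = (Jdet η t y)⁻¹ * b₀ y l) := by
  have hJR := fun y (hy : y ∈ Om) => det_Dmat_mul_eq_of_continuity hη hinv hv hR hcont hy
  have hw := fun y (hy : y ∈ Om) => adjugate_Dmat_mulVec_eq_of_induction hη hinv hv hb hind hy
  refine ⟨fun l t ht y hy => ?_, fun hη0 _ b₀ _ hb0 l t ht y hy => ?_⟩
  · simp only [Amat, sum_mul_inv_apply, inv_mul_eq_div, div_div, hw y hy t ht, hJR y hy t ht]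
  · rw [Amat, sum_mul_inv_apply, hw y hy t ht, Dmat_eq_one hη0, adjugate_one, one_mulVec, hb0,
      Jdet]

/-- Under the continuity and induction equations, `(b_i A^{li})/R` is
independent of `t` for each `l`; consequently, if `η(0,·) = Id`, `R(0,·) = ρ₀`, `b(0,·) = b₀`,
then `b_i A^{li} = J⁻¹ b₀^l` for all `t`. -/
theorem b_dot_A_over_R_conserved
    (T : ℝ) (hT : 0 ≤ T)
    (η : ℝ → V3 → V3)
    (hη : ContDiff ℝ 2 (fun p : ℝ × V3 => η p.1 p.2))
    (hinv : ∀ t ∈ Icc (0 : ℝ) T, ∀ y ∈ Om, (Dmat η t y).det ≠ 0)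
    (v : ℝ → V3 → V3)
    (hv : ∀ t y, v t y = deriv (fun s => η s y) t)
    (R : ℝ → V3 → ℝ)
    (hR : ContDiff ℝ 1 (fun p : ℝ × V3 => R p.1 p.2))
    (hRpos : ∀ t y, 0 < R t y)
    (hcont : ∀ t ∈ Icc (0 : ℝ) T, ∀ y ∈ Om,
      deriv (fun s => R s y) t + R t y * divA η v t y = 0)
    (b : ℝ → V3 → V3)
    (hb : ContDiff ℝ 1 (fun p : ℝ × V3 => b p.1 p.2))
    (hind : ∀ t ∈ Icc (0 : ℝ) T, ∀ y ∈ Om, ∀ i : Fin 3,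
      deriv (fun s => b s y i) t
        = (∑ j, ∑ k, b t y j * Amat η t y k j * pd k (fun z => v t z i) y)
          - b t y i * divA η v t y) :
    (∀ l : Fin 3, ∀ t ∈ Icc (0 : ℝ) T, ∀ y ∈ Om,
        (∑ i, b t y i * Amat η t y l i) / R t y
          = (∑ i, b 0 y i * Amat η 0 y l i) / R 0 y)
    ∧ ((∀ z, η 0 z = z) →
        ∀ (ρ₀ : V3 → ℝ) (b₀ : V3 → V3), (∀ z, R 0 z = ρ₀ z) → (∀ z, b 0 z = b₀ z) →
        ∀ l : Fin 3, ∀ t ∈ Icc (0 : ℝ) T, ∀ y ∈ Om,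
          ∑ i, b t y i * Amat η t y l i = (Jdet η t y)⁻¹ * b₀ y l) :=
  b_dot_A_over_R_conserved_general T η hη hinv v hv R hR hcont b hb hind
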